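/- arXiv:2507.07922 — 3 statements merged into one kernel-verified Lean document; each statement's English description precedes it below -/
import Mathlib

section
/- Let X be a set. There is a bijection between topologies on X and relations R ⊆ βX × X (where βX is the set of ultrafilters on X) satisfying: (UQ1) for every x ∈ X, (pure x, x) ∈ R; and (UQ4) for every index map t : I → βX, every family (x_i)_{i∈I} with (t(i), x_i) ∈ R for all i, every ultrafilter μ on I and every y ∈ X, if (map (fun i => x_i) μ, y) ∈ R, then the Kowalsky sum ultrafilter ∫_I t(i) dμ (the ultrafilter joinM (μ.map t)) satisfies (∫_I t(i) dμ, y) ∈ R. Under this bijection, R is the convergence relation of the topology. -/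
open Filter Set

namespace Stmt0Aux

variable {X : Type u}

/-- The topology induced by a convergence relation. -/
def topOf (R : Set (Ultrafilter X × X)) : TopologicalSpace X where
  IsOpen U := ∀ F x, (F, x) ∈ R → x ∈ U → U ∈ F
  isOpen_univ := fun _ _ _ _ => univ_mem
  isOpen_inter := fun _ _ hU hV F x h hx => inter_mem (hU F x h hx.1) (hV F x h hx.2)
  isOpen_sUnion := fun S hS F x h hx => by
    obtain ⟨U, hU, hxU⟩ := hx
    exact mem_of_superset (hS U hU F x h hxU) (subset_sUnion_of_mem hU)

def rstar (R : Set (Ultrafilter X × X)) (A : Set X) : Set X :=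
  {y | ∃ G : Ultrafilter X, A ∈ G ∧ (G, y) ∈ R}

def UQ (R : Set (Ultrafilter X × X)) : Prop :=
  (∀ x : X, ((pure x : Ultrafilter X), x) ∈ R) ∧
  (∀ (I : Type u) (t : I → Ultrafilter X) (xs : I → X),
    (∀ i, (t i, xs i) ∈ R) →
    ∀ (μ : Ultrafilter I) (y : X),
      (Ultrafilter.map xs μ, y) ∈ R → (μ.bind t, y) ∈ R)

theorem subset_rstar {R : Set (Ultrafilter X × X)} (hR : UQ R) (A : Set X) :
    A ⊆ rstar R A :=
  fun z hz => ⟨pure z, hz, hR.1 z⟩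

theorem rstar_closed {R : Set (Ultrafilter X × X)} (hR : UQ R) (A : Set X)
    {G : Ultrafilter X} {y : X}
    (hGy : (G, y) ∈ R) (hG : rstar R A ∈ G) : y ∈ rstar R A := by
  classical
  set t : X → Ultrafilter X := fun z =>
    if h : z ∈ rstar R A then h.choose else pure z with ht_def
  have ht : ∀ z, (t z, z) ∈ R := by
    intro z
    by_cases h : z ∈ rstar R A
    · simp only [ht_def, dif_pos h]; exact h.choose_spec.2
    · simp only [ht_def, dif_neg h]; exact hR.1 z
  have hmap : (Ultrafilter.map id G, y) ∈ R := by rwa [Ultrafilter.map_id]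
  have hbind := hR.2 X t id ht G y hmap
  refine ⟨G.bind t, ?_, hbind⟩
  show {z | A ∈ t z} ∈ G
  refine mem_of_superset hG ?_
  intro z hz
  simp only [mem_setOf_eq, ht_def, dif_pos hz]
  exact hz.choose_spec.1

/-- Complement of rstar is open. -/
theorem rstar_compl_open {R : Set (Ultrafilter X × X)} (hR : UQ R) (A : Set X) :
    ∀ F x, (F, x) ∈ R → x ∈ (rstar R A)ᶜ → (rstar R A)ᶜ ∈ F := by
  intro F x hFx hx
  rcases F.mem_or_compl_mem (rstar R A) with h | h
  · exact absurd (rstar_closed hR A hFx h) hx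
  · exact h

theorem le_nhds_of_conv {R : Set (Ultrafilter X × X)} {F : Ultrafilter X} {x : X}
    (hFx : (F, x) ∈ R) : (F : Filter X) ≤ @nhds X (topOf R) x := by
  letI := topOf R
  exact le_nhds_iff.2 fun s hxs hso => hso F x hFx hxs

theorem conv_of_le_nhds {R : Set (Ultrafilter X × X)} (hR : UQ R)
    {F : Ultrafilter X} {x : X}
    (h : (F : Filter X) ≤ @nhds X (topOf R) x) : (F, x) ∈ R := by
  classical
  letI := topOf R
  have hst : ∀ A ∈ F, x ∈ rstar R A := by
    intro A hA
    by_contra hx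
    have hopen : IsOpen ((rstar R A)ᶜ) := rstar_compl_open hR A
    have hc : (rstar R A)ᶜ ∈ F := h (hopen.mem_nhds hx)
    exact absurd (mem_of_superset hA (subset_rstar hR A))
      (Ultrafilter.compl_mem_iff_notMem.mp hc)
  let I : Type u := {A : Set X // A ∈ F}
  have hne : Nonempty I := ⟨⟨univ, univ_mem⟩⟩
  let t : I → Ultrafilter X := fun A => (hst A.1 A.2).choose
  have htmem : ∀ A : I, A.1 ∈ t A := fun A => (hst A.1 A.2).choose_spec.1
  have htR : ∀ A : I, (t A, x) ∈ R := fun A => (hst A.1 A.2).choose_spec.2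
  let B : I → Set I := fun A => {A' | A'.1 ⊆ A.1}
  have hdir : Directed (fun x1 x2 => x1 ≥ x2) (fun A => 𝓟 (B A)) := by
    intro A1 A2
    refine ⟨⟨A1.1 ∩ A2.1, inter_mem A1.2 A2.2⟩, ?_, ?_⟩ <;>
    · simp only [ge_iff_le, le_principal_iff, mem_principal]
      intro A' hA'
      have hA'' : A'.1 ⊆ A1.1 ∩ A2.1 := hA'
      first
        | exact fun z hz => (hA'' hz).1
        | exact fun z hz => (hA'' hz).2
  have hneBot : (⨅ A : I, 𝓟 (B A)).NeBot := by
    refine Filter.iInf_neBot_of_directed hdir fun A => ?_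
    exact principal_neBot_iff.2 ⟨A, show A.1 ⊆ A.1 from subset_rfl⟩
  obtain ⟨μ, hμ⟩ := Ultrafilter.exists_le (⨅ A : I, 𝓟 (B A))
  have hμB : ∀ A : I, B A ∈ μ := fun A =>
    hμ (mem_iInf_of_mem A (mem_principal_self _))
  have hmap : (Ultrafilter.map (fun _ : I => x) μ, x) ∈ R := by
    have heq : Ultrafilter.map (fun _ : I => x) μ = pure x := by
      ext s
      show (fun _ : I => x) ⁻¹' s ∈ μ ↔ x ∈ s
      by_cases hxs : x ∈ s
      · rw [Set.preimage_const_of_mem hxs]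
        exact iff_of_true univ_mem hxs
      · simp [Set.preimage_const_of_notMem hxs, hxs]
    rw [heq]; exact hR.1 x
  have hbind := hR.2 I t (fun _ => x) htR μ x hmap
  have hFbind : μ.bind t = F := by
    refine Ultrafilter.coe_le_coe.mp ?_
    intro s hs
    show {A : I | s ∈ t A} ∈ μ
    refine mem_of_superset (hμB ⟨s, hs⟩) ?_
    intro A' hA'
    exact mem_of_superset (htmem A') hA'
  rwa [hFbind] at hbind

theorem main (R : Set (Ultrafilter X × X)) (hR : UQ R) (F : Ultrafilter X) (x : X) :
    (F, x) ∈ R ↔ (F : Filter X) ≤ @nhds X (topOf R) x :=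
  ⟨le_nhds_of_conv, conv_of_le_nhds hR⟩

theorem topOf_conv (τ : TopologicalSpace X) :
    topOf {p : Ultrafilter X × X | (p.1 : Filter X) ≤ @nhds X τ p.2} = τ := by
  letI := τ
  refine TopologicalSpace.ext ?_
  funext U
  show (∀ (F : Ultrafilter X) (x : X), (F : Filter X) ≤ @nhds X τ x → x ∈ U → U ∈ F) = IsOpen U
  rw [isOpen_iff_ultrafilter]
  exact propext ⟨fun h x hx l hl => h l x hl hx, fun h F x hF hx => h x hx F hF⟩

theorem conv_UQ (τ : TopologicalSpace X) :
    UQ {p : Ultrafilter X × X | (p.1 : Filter X) ≤ @nhds X τ p.2} := by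
  letI := τ
  constructor
  · exact fun x => pure_le_nhds x
  · intro I t xs ht μ y hy
    show (μ.bind t : Filter X) ≤ nhds y
    refine le_nhds_iff.2 fun s hys hso => ?_
    show {i | s ∈ t i} ∈ μ
    have h1 : {i | xs i ∈ s} ∈ μ := hy (hso.mem_nhds hys)
    refine mem_of_superset h1 fun i hi => ?_
    exact le_nhds_iff.1 (ht i) s hi hso

end Stmt0Aux

/-- For a set `X` there is a bijection between topologies on `X`
and relations `R ⊆ βX × X` satisfying (UQ1) `(pure x, x) ∈ R` for all `x`, and
(UQ4) for any `t : I → βX`, points `x_i` with `(t i, x_i) ∈ R`, and any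
ultrafilter `μ` on `I` with `(map (fun i => x_i) μ, y) ∈ R`, also
`(∫_I t(i) dμ, y) ∈ R` (where the integral is the monadic join `μ.bind t`).
Under this bijection `R` is the convergence relation of the topology. -/
theorem stmt0 (X : Type u) :
    ∃ e : TopologicalSpace X ≃
      { R : Set (Ultrafilter X × X) //
          (∀ x : X, ((pure x : Ultrafilter X), x) ∈ R) ∧
          (∀ (I : Type u) (t : I → Ultrafilter X) (xs : I → X),
            (∀ i, (t i, xs i) ∈ R) →
            ∀ (μ : Ultrafilter I) (y : X),
              (Ultrafilter.map xs μ, y) ∈ R → (μ.bind t, y) ∈ R) },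
      ∀ (τ : TopologicalSpace X) (F : Ultrafilter X) (x : X),
        (F, x) ∈ (e τ).1 ↔ (F : Filter X) ≤ @nhds X τ x := by
  refine ⟨⟨fun τ => ⟨{p : Ultrafilter X × X | (p.1 : Filter X) ≤ @nhds X τ p.2},
      Stmt0Aux.conv_UQ τ⟩,
    fun R => Stmt0Aux.topOf R.1, ?_, ?_⟩, fun τ F x => Iff.rfl⟩
  · intro τ
    exact Stmt0Aux.topOf_conv τ
  · intro R
    refine Subtype.ext ?_
    ext p
    exact (Stmt0Aux.main R.1 R.2 p.1 p.2).symm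
end

section
/- Let X be a topological space and π : E → X a continuous map. Then π is a local homeomorphism (étale) if and only if π is an open map and the diagonal Δ : E → E ×_X E is an open map (equivalently, the diagonal subset of the fibre product E ×_X E is open). -/
/-- A continuous map `π : E → X` is a local homeomorphism
(étale) iff `π` is an open map and the diagonal of the fibre product
`E ×_X E = {(e₁,e₂) | π e₁ = π e₂}` (with the subspace topology) is open. -/
theorem stmt6 {E X : Type*} [TopologicalSpace E] [TopologicalSpace X]
    (π : E → X) (hπ : Continuous π) :
    IsLocalHomeomorph π ↔
      (IsOpenMap π ∧
        IsOpen {p : {q : E × E // π q.1 = π q.2} | p.1.1 = p.1.2}) := by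
  constructor
  · intro h
    refine ⟨h.isOpenMap, ?_⟩
    rw [isOpen_iff_forall_mem_open]
    rintro ⟨⟨a, b⟩, hab⟩ (heq : a = b)
    subst heq
    obtain ⟨e, hae, he⟩ := h a
    refine ⟨{p : {q : E × E // π q.1 = π q.2} | p.1.1 ∈ e.source ∧ p.1.2 ∈ e.source},
      ?_, ?_, hae, hae⟩
    · rintro ⟨⟨x, y⟩, hxy⟩ ⟨hx, hy⟩
      have : e x = e y := by rw [← he]; exact hxy
      exact e.injOn hx hy this
    · exact (e.open_source.preimage (continuous_fst.comp continuous_subtype_val)).inter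
        (e.open_source.preimage (continuous_snd.comp continuous_subtype_val))
  · rintro ⟨hopen, hdiag⟩
    rw [isLocalHomeomorph_iff_isOpenEmbedding_restrict]
    intro x
    obtain ⟨O, hO, hOeq⟩ := isOpen_induced_iff.mp hdiag
    have hxO : ((x, x) : E × E) ∈ O := by
      have : (⟨(x, x), rfl⟩ : {q : E × E // π q.1 = π q.2}) ∈
          Subtype.val ⁻¹' O := by rw [hOeq]; rfl
      exact this
    obtain ⟨U, V, hU, hV, hxU, hxV, hUV⟩ := isOpen_prod_iff.mp hO x x hxO
    set W := U ∩ V with hWdef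
    have hW : IsOpen W := hU.inter hV
    have hxW : x ∈ W := ⟨hxU, hxV⟩
    have hinj : Set.InjOn π W := by
      intro a ha b hb hab
      have hmem : (⟨(a, b), hab⟩ : {q : E × E // π q.1 = π q.2}) ∈
          Subtype.val ⁻¹' O := hUV (Set.mk_mem_prod ha.1 hb.2)
      rw [hOeq] at hmem
      exact hmem
    refine ⟨W, hW.mem_nhds hxW, ?_⟩
    refine Topology.IsOpenEmbedding.of_continuous_injective_isOpenMap
      (hπ.comp continuous_subtype_val) ?_ ?_
    · rintro ⟨a, ha⟩ ⟨b, hb⟩ hab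
      exact Subtype.ext (hinj ha hb hab)
    · exact hopen.comp hW.isOpenMap_subtype_val
end

section
/- Let X be a set equipped with a convergence relation R ⊆ βX × X satisfying UQ1 (principal ultrafilters converge to their points) and UQ4 (the iterated-limits/monadic-multiplication condition). Define a subset U ⊆ X to be open iff for every (F, x) ∈ R with x ∈ U, we have U ∈ F. Then this defines a topology on X, and an ultrafilter F converges to x for this topology if and only if (F, x) ∈ R. -/
universe u

/-- Let `X` carry a convergence relation `R ⊆ βX × X`
satisfying UQ1 (principal ultrafilters converge to their points) and UQ4 (the
iterated-limits / monadic-multiplication condition).  Declaring `U ⊆ X` open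
iff `U ∈ F` for every `(F, x) ∈ R` with `x ∈ U` defines a topology on `X`, and
an ultrafilter `F` converges to `x` for this topology iff `(F, x) ∈ R`. -/
theorem stmt16 (X : Type u) (R : Set (Ultrafilter X × X))
    (UQ1 : ∀ x : X, ((pure x : Ultrafilter X), x) ∈ R)
    (UQ4 : ∀ (I : Type u) (t : I → Ultrafilter X) (xs : I → X),
      (∀ i, (t i, xs i) ∈ R) →
      ∀ (μ : Ultrafilter I) (y : X),
        (Ultrafilter.map xs μ, y) ∈ R → (μ.bind t, y) ∈ R) :
    ∃ τ : TopologicalSpace X,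
      (∀ U : Set X, τ.IsOpen U ↔ ∀ p ∈ R, p.2 ∈ U → U ∈ p.1) ∧
      (∀ (F : Ultrafilter X) (x : X),
        ((F : Filter X) ≤ @nhds X τ x ↔ (F, x) ∈ R)) := by
  classical
  have mem_bind : ∀ (μ : Ultrafilter X) (t : X → Ultrafilter X) (s : Set X),
      s ∈ μ.bind t ↔ {i | s ∈ t i} ∈ μ := by
    intro μ t s
    exact Filter.mem_bind'
  -- the candidate topology
  letI τ : TopologicalSpace X :=
    { IsOpen := fun U => ∀ p ∈ R, p.2 ∈ U → U ∈ p.1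
      isOpen_univ := fun p _ _ => Filter.univ_mem
      isOpen_inter := fun U V hU hV p hp hpm =>
        Filter.inter_mem (hU p hp hpm.1) (hV p hp hpm.2)
      isOpen_sUnion := fun S hS p hp hpm => by
        obtain ⟨U, hUS, hpU⟩ := hpm
        exact Filter.mem_of_superset (hS U hUS p hp hpU) (Set.subset_sUnion_of_mem hUS) }
  -- key: the "kernel" set is open
  have key : ∀ V : Set X,
      IsOpen {y | ∀ G : Ultrafilter X, (G, y) ∈ R → V ∈ G} := by
    intro V
    set U := {y | ∀ G : Ultrafilter X, (G, y) ∈ R → V ∈ G} with hUdef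
    rintro ⟨G, y⟩ hGy hy
    by_contra hU
    have hUc : Uᶜ ∈ G := Ultrafilter.compl_mem_iff_notMem.2 hU
    have hchoice : ∀ z : (Uᶜ : Set X), ∃ H : Ultrafilter X,
        (H, (z : X)) ∈ R ∧ V ∉ H := by
      rintro ⟨z, hz⟩
      by_contra h
      push_neg at h
      exact hz fun H hH => h H hH
    choose t ht hvt using hchoice
    have hrange : Set.range (Subtype.val : (Uᶜ : Set X) → X) ∈ G := by
      rwa [Subtype.range_coe]
    have inj : Function.Injective (Subtype.val : (Uᶜ : Set X) → X) :=
      Subtype.val_injective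
    set μ : Ultrafilter (Uᶜ : Set X) := G.comap inj hrange with hμ
    have hmap : Ultrafilter.map (fun z : (Uᶜ : Set X) => (z : X)) μ = G := by
      apply Ultrafilter.coe_injective
      apply Ultrafilter.unique G
      rw [Ultrafilter.coe_map, Ultrafilter.coe_comap]
      exact Filter.map_comap_le
    have hUQ4 := UQ4 (Uᶜ : Set X) t (fun z => (z : X)) ht μ y (by rw [hmap]; exact hGy)
    have hVbind : V ∈ μ.bind t := hy _ hUQ4
    have : {i : (Uᶜ : Set X) | V ∈ t i} ∈ μ := Filter.mem_bind'.1 hVbind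
    have hempty : {i : (Uᶜ : Set X) | V ∈ t i} = ∅ := by
      ext i; simp only [Set.mem_setOf_eq, Set.mem_empty_iff_false, iff_false]
      exact hvt i
    rw [hempty] at this
    exact Filter.empty_notMem (μ : Filter (Uᶜ : Set X)) this
  refine ⟨τ, fun U => Iff.rfl, fun F x => ?_⟩
  constructor
  · -- hard direction: topological convergence implies R-convergence
    intro hle
    -- every set in the "neighborhood system" n(x) is in F
    have hn : ∀ V : Set X, (∀ G : Ultrafilter X, (G, x) ∈ R → V ∈ G) → V ∈ F := by
      intro V hV
      have hU : {y | ∀ G : Ultrafilter X, (G, y) ∈ R → V ∈ G} ∈ F :=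
        le_nhds_iff.1 hle _ hV (key V)
      refine Filter.mem_of_superset hU ?_
      intro y hy
      have : V ∈ (pure y : Ultrafilter X) := hy (pure y) (UQ1 y)
      exact this
    -- choose for each A ∈ F a witness ultrafilter containing A converging to x
    set I := {A : Set X // A ∈ F} with hI
    have hchoice : ∀ A : I, ∃ G : Ultrafilter X,
        (G, x) ∈ R ∧ (A : Set X) ∈ G := by
      rintro ⟨A, hA⟩
      by_contra h
      push_neg at h
      have : Aᶜ ∈ F := hn Aᶜ (fun G hG => Ultrafilter.compl_mem_iff_notMem.2 (h G hG))
      exact (Ultrafilter.compl_mem_iff_notMem.1 this) hA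
    choose t ht hmem using hchoice
    set L : Filter I := Filter.comap (fun A : I => (A : Set X)) (F : Filter X).smallSets
      with hL
    have hLne : L.NeBot := by
      rw [hL, Filter.comap_neBot_iff]
      intro s hs
      obtain ⟨B, hB, hBs⟩ := (Filter.hasBasis_smallSets _).mem_iff.1 hs
      exact ⟨⟨B, hB⟩, hBs (le_refl B)⟩
    set μ : Ultrafilter I := @Ultrafilter.of I L hLne with hμ
    have hbind : μ.bind t = F := by
      have hle2 : (μ.bind t : Filter X) ≤ (F : Filter X) := by
        intro B hB
        have h1 : {A : I | B ∈ t A} ∈ μ := by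
          refine (Ultrafilter.of_le L) ?_
          rw [hL]
          refine Filter.mem_comap.2
            ⟨𝒫 B, (Filter.hasBasis_smallSets _).mem_of_mem hB, ?_⟩
          intro A hA
          exact Filter.mem_of_superset (hmem A) hA
        exact Filter.mem_bind'.2 h1
      exact Ultrafilter.coe_le_coe.1 hle2
    have hmapconst : Ultrafilter.map (fun _ : I => x) μ = pure x := by
      apply Ultrafilter.coe_injective
      rw [Ultrafilter.coe_map]
      exact Filter.map_const
    have := UQ4 I t (fun _ => x) ht μ x (by rw [hmapconst]; exact UQ1 x)
    rwa [hbind] at this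
  · -- easy direction
    intro hFx
    rw [le_nhds_iff]
    intro s hxs hs
    exact hs (F, x) hFx hxs
end
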